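/- Let D₀ = D₁ ×_e D₂ where D₁ and D₂ are open domains in ℂ(i₁), and let (F, G) be an i₂e-generating pair on D₀. If w : D₀ → 𝕋 is (F,G)_j-pseudoanalytic on D₀, then w(z₁ + z₂i₂) = w_{e1}(z₁ − z₂i₁)e₁ + w_{e2}(z₁ + z₂i₁)e₂ where w_{e1} is an (F_{e1}, G_{e1})-pseudoanalytic function on D₁ and w_{e2} is an (F_{e2}, G_{e2})-pseudoanalytic function on D₂; moreover the derivatives satisfy ẇ(z₁ + z₂i₂) = ẇ_{e1}(z₁ − z₂i₁)e₁ + ẇ_{e2}(z₁ + z₂i₁)e₂ on D₀. -/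

import Mathlib

noncomputable section

open Complex Filter Topology

/-- The bicomplex numbers `𝕋 = {z₁ + z₂ i₂ : z₁, z₂ ∈ ℂ(i₁)}`, represented by the pair
of `ℂ(i₁)`-components `(z₁, z₂)`. -/
@[ext] structure Bicomplex : Type where
  z1 : ℂ
  z2 : ℂ

namespace Bicomplex

instance : Zero Bicomplex := ⟨⟨0, 0⟩⟩
instance : One Bicomplex := ⟨⟨1, 0⟩⟩
instance : Add Bicomplex := ⟨fun w v => ⟨w.z1 + v.z1, w.z2 + v.z2⟩⟩
instance : Neg Bicomplex := ⟨fun w => ⟨-w.z1, -w.z2⟩⟩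
instance : Mul Bicomplex := ⟨fun w v => ⟨w.z1 * v.z1 - w.z2 * v.z2, w.z1 * v.z2 + w.z2 * v.z1⟩⟩

@[simp] lemma zero_z1 : (0 : Bicomplex).z1 = 0 := rfl
@[simp] lemma zero_z2 : (0 : Bicomplex).z2 = 0 := rfl
@[simp] lemma one_z1 : (1 : Bicomplex).z1 = 1 := rfl
@[simp] lemma one_z2 : (1 : Bicomplex).z2 = 0 := rfl
@[simp] lemma add_z1 (w v : Bicomplex) : (w + v).z1 = w.z1 + v.z1 := rfl
@[simp] lemma add_z2 (w v : Bicomplex) : (w + v).z2 = w.z2 + v.z2 := rfl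
@[simp] lemma neg_z1 (w : Bicomplex) : (-w).z1 = -w.z1 := rfl
@[simp] lemma neg_z2 (w : Bicomplex) : (-w).z2 = -w.z2 := rfl
@[simp] lemma mul_z1 (w v : Bicomplex) : (w * v).z1 = w.z1 * v.z1 - w.z2 * v.z2 := rfl
@[simp] lemma mul_z2 (w v : Bicomplex) : (w * v).z2 = w.z1 * v.z2 + w.z2 * v.z1 := rfl

/-- The bicomplex numbers form a commutative ring. -/
instance : CommRing Bicomplex where
  nsmul n w := ⟨n • w.z1, n • w.z2⟩
  zsmul n w := ⟨n • w.z1, n • w.z2⟩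
  nsmul_zero a := by ext <;> exact zero_smul ℕ _
  nsmul_succ n a := by
    ext
    · exact succ_nsmul a.z1 n
    · exact succ_nsmul a.z2 n
  zsmul_zero' a := by ext <;> exact zero_smul ℤ _
  zsmul_succ' n a := by
    ext
    · exact (by simp; ring : ((n.succ : ℤ) • a.z1) = (n : ℤ) • a.z1 + a.z1)
    · exact (by simp; ring : ((n.succ : ℤ) • a.z2) = (n : ℤ) • a.z2 + a.z2)
  zsmul_neg' n a := by
    ext
    · exact (by simp; ring : (Int.negSucc n • a.z1) = -((n.succ : ℤ) • a.z1))
    · exact (by simp; ring : (Int.negSucc n • a.z2) = -((n.succ : ℤ) • a.z2))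
  add_assoc a b c := by ext <;> simp <;> ring
  zero_add a := by ext <;> simp
  add_zero a := by ext <;> simp
  add_comm a b := by ext <;> simp <;> ring
  neg_add_cancel a := by ext <;> simp
  mul_assoc a b c := by ext <;> simp <;> ring
  one_mul a := by ext <;> simp
  mul_one a := by ext <;> simp
  left_distrib a b c := by ext <;> simp <;> ring
  right_distrib a b c := by ext <;> simp <;> ring
  zero_mul a := by ext <;> simp
  mul_zero a := by ext <;> simp
  mul_comm a b := by ext <;> simp <;> ring

/-- Inverse: `w⁻¹ = w†₂ / (z₁² + z₂²)` (junk value `0/0` on the null-cone). -/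
instance : Inv Bicomplex :=
  ⟨fun w => ⟨w.z1 / (w.z1 ^ 2 + w.z2 ^ 2), -w.z2 / (w.z1 ^ 2 + w.z2 ^ 2)⟩⟩

instance : Div Bicomplex := ⟨fun w v => w * v⁻¹⟩

/-- Embedding of `ℂ(i₁)` into `𝕋`. -/
def ofComplex (c : ℂ) : Bicomplex := ⟨c, 0⟩

/-- Embedding of `ℝ` into `𝕋`. -/
def ofReal (t : ℝ) : Bicomplex := ⟨(t : ℂ), 0⟩

/-- The imaginary unit `i₁`. -/
def i1 : Bicomplex := ⟨Complex.I, 0⟩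

/-- The imaginary unit `i₂`. -/
def i2 : Bicomplex := ⟨0, 1⟩

/-- The hyperbolic unit `j = i₁ i₂`. -/
def jj : Bicomplex := ⟨0, Complex.I⟩

/-- The idempotent `e₁ = (1 + j)/2`. -/
def e1 : Bicomplex := ⟨1 / 2, Complex.I / 2⟩

/-- The idempotent `e₂ = (1 - j)/2`. -/
def e2 : Bicomplex := ⟨1 / 2, -(Complex.I) / 2⟩

/-- The projection `P₁(z₁ + z₂ i₂) = z₁ - z₂ i₁`. -/
def P1 (w : Bicomplex) : ℂ := w.z1 - w.z2 * Complex.I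

/-- The projection `P₂(z₁ + z₂ i₂) = z₁ + z₂ i₁`. -/
def P2 (w : Bicomplex) : ℂ := w.z1 + w.z2 * Complex.I

/-- The conjugation `w†₁ = z̄₁ + z̄₂ i₂`. -/
def dag1 (w : Bicomplex) : Bicomplex := ⟨(starRingEnd ℂ) w.z1, (starRingEnd ℂ) w.z2⟩

/-- The conjugation `w†₂ = z₁ - z₂ i₂`. -/
def dag2 (w : Bicomplex) : Bicomplex := ⟨w.z1, -w.z2⟩

/-- The conjugation `w†₃ = z̄₁ - z̄₂ i₂`. -/
def dag3 (w : Bicomplex) : Bicomplex := ⟨(starRingEnd ℂ) w.z1, -((starRingEnd ℂ) w.z2)⟩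

/-- `𝕋` as `ℂ × ℂ`. -/
def toProd (w : Bicomplex) : ℂ × ℂ := (w.z1, w.z2)

/-- `ℂ × ℂ` as `𝕋`. -/
def ofProd (p : ℂ × ℂ) : Bicomplex := ⟨p.1, p.2⟩

instance : TopologicalSpace Bicomplex := TopologicalSpace.induced toProd inferInstance

/-- The set of points `w` such that `w - w₀` is invertible (i.e. not a zero divisor). -/
def invertibleDiff (w₀ : Bicomplex) : Set Bicomplex :=
  {w | (w - w₀).z1 ^ 2 + (w - w₀).z2 ^ 2 ≠ 0}

/-- `f` is `𝕋`-differentiable at `w₀` with derivative `d`: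
`(f w - f w₀)/(w - w₀) → d` as `w → w₀` with `w - w₀` invertible. -/
def HasTDerivAt (f : Bicomplex → Bicomplex) (d w₀ : Bicomplex) : Prop :=
  Tendsto (fun w => (f w - f w₀) / (w - w₀)) (𝓝[invertibleDiff w₀] w₀) (𝓝 d)

/-- `f` is `𝕋`-holomorphic on `U` if it is `𝕋`-differentiable at each point of `U`. -/
def THolomorphicOn (f : Bicomplex → Bicomplex) (U : Set Bicomplex) : Prop :=
  ∀ w ∈ U, ∃ d, HasTDerivAt f d w

/-- `f` viewed as a map `ℂ² → ℂ²`. -/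
def fProd (f : Bicomplex → Bicomplex) : ℂ × ℂ → ℂ × ℂ := fun p => toProd (f (ofProd p))

/-- `f : 𝕋 → 𝕋` is `n` times continuously (real-)differentiable on `U`. -/
def TContDiffOn (n : ℕ∞) (f : Bicomplex → Bicomplex) (U : Set Bicomplex) : Prop :=
  ContDiffOn ℝ n (fProd f) (toProd '' U)

/-- `g : 𝕋 → ℂ` is `n` times continuously (real-)differentiable on `U`. -/
def CContDiffOn (n : ℕ∞) (g : Bicomplex → ℂ) (U : Set Bicomplex) : Prop :=
  ContDiffOn ℝ n (fun p => g (ofProd p)) (toProd '' U)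

/-- Real partial derivative of `g : 𝕋 → ℂ` at `w` in direction `e`. -/
def pd (e : Bicomplex) (g : Bicomplex → ℂ) (w : Bicomplex) : ℂ :=
  deriv (fun t : ℝ => g (w + ofReal t * e)) 0

/-- Existence of the real partial derivative of `g : 𝕋 → ℂ` at `w` in direction `e`. -/
def pdExists (e : Bicomplex) (g : Bicomplex → ℂ) (w : Bicomplex) : Prop :=
  DifferentiableAt ℝ (fun t : ℝ => g (w + ofReal t * e)) 0

/-- The scalar (`ℂ(i₁)`-) component `f₁` of `f = f₁ + f₂ i₂`. -/
def s1 (f : Bicomplex → Bicomplex) : Bicomplex → ℂ := fun w => (f w).z1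

/-- The vectorial (`ℂ(i₁)`-) component `f₂` of `f = f₁ + f₂ i₂`. -/
def s2 (f : Bicomplex → Bicomplex) : Bicomplex → ℂ := fun w => (f w).z2

/-- Real partial derivative of `f : 𝕋 → 𝕋` in direction `e`. -/
def pdT (e : Bicomplex) (f : Bicomplex → Bicomplex) : Bicomplex → Bicomplex :=
  fun w => ⟨pd e (s1 f) w, pd e (s2 f) w⟩

/-- Existence of the real partial derivative of `f : 𝕋 → 𝕋` in direction `e`. -/
def pdTExists (e : Bicomplex) (f : Bicomplex → Bicomplex) (w : Bicomplex) : Prop :=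
  pdExists e (s1 f) w ∧ pdExists e (s2 f) w

/-- `∂_{z₁} g = ½(∂ₓ g - i₁ ∂_y g)` for `g : 𝕋 → ℂ`. -/
def dz1 (g : Bicomplex → ℂ) : Bicomplex → ℂ :=
  fun w => (pd 1 g w - Complex.I * pd i1 g w) / 2

/-- `∂_{z̄₁} g = ½(∂ₓ g + i₁ ∂_y g)` for `g : 𝕋 → ℂ`. -/
def dz1bar (g : Bicomplex → ℂ) : Bicomplex → ℂ :=
  fun w => (pd 1 g w + Complex.I * pd i1 g w) / 2

/-- `∂_{z₂} g = ½(∂_p g - i₁ ∂_q g)` for `g : 𝕋 → ℂ`. -/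
def dz2 (g : Bicomplex → ℂ) : Bicomplex → ℂ :=
  fun w => (pd i2 g w - Complex.I * pd jj g w) / 2

/-- `∂_{z̄₂} g = ½(∂_p g + i₁ ∂_q g)` for `g : 𝕋 → ℂ`. -/
def dz2bar (g : Bicomplex → ℂ) : Bicomplex → ℂ :=
  fun w => (pd i2 g w + Complex.I * pd jj g w) / 2

/-- `∂_{z₁}` applied componentwise to `f : 𝕋 → 𝕋`. -/
def dZ1 (f : Bicomplex → Bicomplex) : Bicomplex → Bicomplex :=
  fun w => ⟨dz1 (s1 f) w, dz1 (s2 f) w⟩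

/-- `∂_{z₂}` applied componentwise to `f : 𝕋 → 𝕋`. -/
def dZ2 (f : Bicomplex → Bicomplex) : Bicomplex → Bicomplex :=
  fun w => ⟨dz2 (s1 f) w, dz2 (s2 f) w⟩

/-- `∂_{z̄₁}` applied componentwise to `f : 𝕋 → 𝕋`. -/
def dZ1bar (f : Bicomplex → Bicomplex) : Bicomplex → Bicomplex :=
  fun w => ⟨dz1bar (s1 f) w, dz1bar (s2 f) w⟩

/-- `∂_{z̄₂}` applied componentwise to `f : 𝕋 → 𝕋`. -/
def dZ2bar (f : Bicomplex → Bicomplex) : Bicomplex → Bicomplex :=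
  fun w => ⟨dz2bar (s1 f) w, dz2bar (s2 f) w⟩

/-- `∂_ω = ½(∂_{z₁} - i₂ ∂_{z₂})`. -/
def dOm (f : Bicomplex → Bicomplex) : Bicomplex → Bicomplex :=
  fun w => ofComplex (1 / 2) * (dZ1 f w - i2 * dZ2 f w)

/-- `∂_{ω†₂} = ∂_ω̄ = ½(∂_{z₁} + i₂ ∂_{z₂})`. -/
def dOmBar (f : Bicomplex → Bicomplex) : Bicomplex → Bicomplex :=
  fun w => ofComplex (1 / 2) * (dZ1 f w + i2 * dZ2 f w)

/-- `∂_{ω†₁} = ½(∂_{z̄₁} - i₂ ∂_{z̄₂})`. -/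
def dOmDag1 (f : Bicomplex → Bicomplex) : Bicomplex → Bicomplex :=
  fun w => ofComplex (1 / 2) * (dZ1bar f w - i2 * dZ2bar f w)

/-- `∂_{ω†₃} = ½(∂_{z̄₁} + i₂ ∂_{z̄₂})`. -/
def dOmDag3 (f : Bicomplex → Bicomplex) : Bicomplex → Bicomplex :=
  fun w => ofComplex (1 / 2) * (dZ1bar f w + i2 * dZ2bar f w)

/-- The complexified Laplacian `Δ_ℂ = ∂²_{z₁} + ∂²_{z₂}` acting on `ℂ(i₁)`-valued functions. -/
def lapC (g : Bicomplex → ℂ) : Bicomplex → ℂ :=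
  fun w => dz1 (dz1 g) w + dz2 (dz2 g) w

/-- The vector part in the `i₂`-representation `w = ζ₁ + ζ₂ i₁` with `ζ₁, ζ₂ ∈ ℂ(i₂)`:
for `w = x₁ + x₂i₁ + x₃i₂ + x₄j`, `Vec(w) = x₂ + x₄ i₂`, encoded as the complex number
`x₂ + x₄ i`. -/
def vec2 (w : Bicomplex) : ℂ := ⟨w.z1.im, w.z2.im⟩

/-- Embedding of `ℂ(i₂)` into `𝕋`: the complex number `a + b i` represents `a + b i₂`. -/
def ofC2 (c : ℂ) : Bicomplex := ⟨(c.re : ℂ), (c.im : ℂ)⟩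

/-- Multiplication of hyperbolic numbers `ℂ(j) = {x + yj}`, encoded as pairs in `ℝ × ℝ`. -/
def hmul (a b : ℝ × ℝ) : ℝ × ℝ := (a.1 * b.1 + a.2 * b.2, a.1 * b.2 + a.2 * b.1)

/-- Division of hyperbolic numbers (junk value when the denominator is a zero divisor). -/
def hdiv (a b : ℝ × ℝ) : ℝ × ℝ :=
  hmul a (b.1 / (b.1 ^ 2 - b.2 ^ 2), -b.2 / (b.1 ^ 2 - b.2 ^ 2))

/-- Embedding of the hyperbolic numbers `ℂ(j)` into `𝕋`: `(x, y) ↦ x + y j`. -/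
def ofHyp (a : ℝ × ℝ) : Bicomplex := ⟨(a.1 : ℂ), (a.2 : ℂ) * Complex.I⟩

/-- The vector part in the `j`-representation `w = ζ₁ + ζ₂ i₁` with `ζ₁, ζ₂ ∈ ℂ(j)`:
for `w = x₁ + x₂i₁ + x₃i₂ + x₄j`, `Vec(w) = x₂ - x₃ j`, encoded as the pair `(x₂, -x₃)`. -/
def vec3 (w : Bicomplex) : ℝ × ℝ := (w.z1.im, -w.z2.re)

/-- The `𝕋`-cartesian set `X₁ ×ₑ X₂ = {w : P₁ w ∈ X₁ ∧ P₂ w ∈ X₂}`. -/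
def eProd (X₁ X₂ : Set ℂ) : Set Bicomplex := {w | P1 w ∈ X₁ ∧ P2 w ∈ X₂}

/-- `(F, G)` is an `i₁`-generating pair on `D`. -/
def GenPair1 (F G : Bicomplex → Bicomplex) (D : Set Bicomplex) : Prop :=
  TContDiffOn 2 F D ∧ TContDiffOn 2 G D ∧ ∀ w ∈ D, (dag2 (F w) * G w).z2 ≠ 0

/-- `(F, G)` is an `i₂`-generating pair on `D`. -/
def GenPair2 (F G : Bicomplex → Bicomplex) (D : Set Bicomplex) : Prop :=
  TContDiffOn 2 F D ∧ TContDiffOn 2 G D ∧ ∀ w ∈ D, vec2 (dag1 (F w) * G w) ≠ 0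

/-- `(F, G)` is a `j`-generating pair on `D`. -/
def GenPairJ (F G : Bicomplex → Bicomplex) (D : Set Bicomplex) : Prop :=
  TContDiffOn 2 F D ∧ TContDiffOn 2 G D ∧ ∀ w ∈ D, vec3 (dag3 (F w) * G w) ≠ 0

/-- The unique `λ₀ ∈ ℂ(i₁)` with `w(ω₀) = λ₀ F(ω₀) + μ₀ G(ω₀)`. -/
def lam1 (F G wf : Bicomplex → Bicomplex) (ω₀ : Bicomplex) : ℂ :=
  (dag2 (wf ω₀) * G ω₀).z2 / (dag2 (F ω₀) * G ω₀).z2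

/-- The unique `μ₀ ∈ ℂ(i₁)` with `w(ω₀) = λ₀ F(ω₀) + μ₀ G(ω₀)`. -/
def mu1 (F G wf : Bicomplex → Bicomplex) (ω₀ : Bicomplex) : ℂ :=
  -((dag2 (wf ω₀) * F ω₀).z2 / (dag2 (F ω₀) * G ω₀).z2)

/-- `w` has `(F,G)_{i₁}`-derivative `d` at `ω₀`. -/
def HasFGDeriv1 (F G wf : Bicomplex → Bicomplex) (d ω₀ : Bicomplex) : Prop :=
  Tendsto
    (fun ω => (wf ω - ofComplex (lam1 F G wf ω₀) * F ω - ofComplex (mu1 F G wf ω₀) * G ω)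
        / (ω - ω₀))
    (𝓝[invertibleDiff ω₀] ω₀) (𝓝 d)

/-- The unique `λ₀ ∈ ℂ(j)` with `w(ω₀) = λ₀ F(ω₀) + μ₀ G(ω₀)`. -/
def lamJ (F G wf : Bicomplex → Bicomplex) (ω₀ : Bicomplex) : ℝ × ℝ :=
  hdiv (vec3 (dag3 (wf ω₀) * G ω₀)) (vec3 (dag3 (F ω₀) * G ω₀))

/-- The unique `μ₀ ∈ ℂ(j)` with `w(ω₀) = λ₀ F(ω₀) + μ₀ G(ω₀)`. -/
def muJ (F G wf : Bicomplex → Bicomplex) (ω₀ : Bicomplex) : ℝ × ℝ :=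
  -(hdiv (vec3 (dag3 (wf ω₀) * F ω₀)) (vec3 (dag3 (F ω₀) * G ω₀)))

/-- `w` has `(F,G)_j`-derivative `d` at `ω₀`. -/
def HasFGDerivJ (F G wf : Bicomplex → Bicomplex) (d ω₀ : Bicomplex) : Prop :=
  Tendsto
    (fun ω => (wf ω - ofHyp (lamJ F G wf ω₀) * F ω - ofHyp (muJ F G wf ω₀) * G ω) / (ω - ω₀))
    (𝓝[invertibleDiff ω₀] ω₀) (𝓝 d)

/-- `w` is `(F,G)_j`-pseudoanalytic on `D`. -/
def PseudoanalyticJ (F G wf : Bicomplex → Bicomplex) (D : Set Bicomplex) : Prop :=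
  ∀ ω ∈ D, ∃ d, HasFGDerivJ F G wf d ω

/-- `w` has continuous partial derivatives in a neighborhood of `ω₀`. -/
def HasContPartialsNear (f : Bicomplex → Bicomplex) (w₀ : Bicomplex) : Prop :=
  ∃ V ∈ 𝓝 w₀, ∀ e ∈ ({1, i1, i2, jj} : Set Bicomplex),
    (∀ w ∈ V, pdTExists e f w) ∧ ContinuousOn (pdT e f) V

/-! Characteristic coefficients with respect to the `†₂` conjugation (`i₁` case). -/

def denom2 (F G : Bicomplex → Bicomplex) (w : Bicomplex) : Bicomplex :=
  F w * dag2 (G w) - dag2 (F w) * G w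

def aCoef2₁ (F G : Bicomplex → Bicomplex) (w : Bicomplex) : Bicomplex :=
  -((dag1 (F w) * dOmDag1 G w - dOmDag1 F w * dag1 (G w)) / denom2 F G w)

def bCoef2₁ (F G : Bicomplex → Bicomplex) (w : Bicomplex) : Bicomplex :=
  (F w * dOmDag1 G w - dOmDag1 F w * G w) / denom2 F G w

def aCoef2₂ (F G : Bicomplex → Bicomplex) (w : Bicomplex) : Bicomplex :=
  -((dag2 (F w) * dOmBar G w - dOmBar F w * dag2 (G w)) / denom2 F G w)

def bCoef2₂ (F G : Bicomplex → Bicomplex) (w : Bicomplex) : Bicomplex :=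
  (F w * dOmBar G w - dOmBar F w * G w) / denom2 F G w

def aCoef2₃ (F G : Bicomplex → Bicomplex) (w : Bicomplex) : Bicomplex :=
  -((dag3 (F w) * dOmDag3 G w - dOmDag3 F w * dag3 (G w)) / denom2 F G w)

def bCoef2₃ (F G : Bicomplex → Bicomplex) (w : Bicomplex) : Bicomplex :=
  (F w * dOmDag3 G w - dOmDag3 F w * G w) / denom2 F G w

def Acoef2 (F G : Bicomplex → Bicomplex) (w : Bicomplex) : Bicomplex :=
  -((dag2 (F w) * dOm G w - dOm F w * dag2 (G w)) / denom2 F G w)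

def Bcoef2 (F G : Bicomplex → Bicomplex) (w : Bicomplex) : Bicomplex :=
  (F w * dOm G w - dOm F w * G w) / denom2 F G w

/-! Characteristic coefficients with respect to the `†₃` conjugation (`j` case). -/

def denom3 (F G : Bicomplex → Bicomplex) (w : Bicomplex) : Bicomplex :=
  F w * dag3 (G w) - dag3 (F w) * G w

def aCoef3₁ (F G : Bicomplex → Bicomplex) (w : Bicomplex) : Bicomplex :=
  -((dag1 (F w) * dOmDag1 G w - dOmDag1 F w * dag1 (G w)) / denom3 F G w)

def bCoef3₁ (F G : Bicomplex → Bicomplex) (w : Bicomplex) : Bicomplex :=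
  (F w * dOmDag1 G w - dOmDag1 F w * G w) / denom3 F G w

def aCoef3₂ (F G : Bicomplex → Bicomplex) (w : Bicomplex) : Bicomplex :=
  -((dag2 (F w) * dOmBar G w - dOmBar F w * dag2 (G w)) / denom3 F G w)

def bCoef3₂ (F G : Bicomplex → Bicomplex) (w : Bicomplex) : Bicomplex :=
  (F w * dOmBar G w - dOmBar F w * G w) / denom3 F G w

def aCoef3₃ (F G : Bicomplex → Bicomplex) (w : Bicomplex) : Bicomplex :=
  -((dag3 (F w) * dOmDag3 G w - dOmDag3 F w * dag3 (G w)) / denom3 F G w)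

def bCoef3₃ (F G : Bicomplex → Bicomplex) (w : Bicomplex) : Bicomplex :=
  (F w * dOmDag3 G w - dOmDag3 F w * G w) / denom3 F G w

def Acoef3 (F G : Bicomplex → Bicomplex) (w : Bicomplex) : Bicomplex :=
  -((dag3 (F w) * dOm G w - dOm F w * dag3 (G w)) / denom3 F G w)

def Bcoef3 (F G : Bicomplex → Bicomplex) (w : Bicomplex) : Bicomplex :=
  (F w * dOm G w - dOm F w * G w) / denom3 F G w

/-! Classical (Bers) pseudoanalytic function theory in `ℂ(i₁)`. -/

/-- A complex (in `i₁`) generating pair on `D ⊆ ℂ(i₁)`. -/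
def ComplexGenPair (Fe Ge : ℂ → ℂ) (D : Set ℂ) : Prop :=
  ContDiffOn ℝ 2 Fe D ∧ ContDiffOn ℝ 2 Ge D ∧
    ∀ z ∈ D, ((starRingEnd ℂ) (Fe z) * Ge z).im ≠ 0

/-- The unique real `λ₀` with `w(z₀) = λ₀ F(z₀) + μ₀ G(z₀)`. -/
def lamBers (Fe Ge we : ℂ → ℂ) (z₀ : ℂ) : ℝ :=
  ((starRingEnd ℂ) (we z₀) * Ge z₀).im / ((starRingEnd ℂ) (Fe z₀) * Ge z₀).im

/-- The unique real `μ₀` with `w(z₀) = λ₀ F(z₀) + μ₀ G(z₀)`. -/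
def muBers (Fe Ge we : ℂ → ℂ) (z₀ : ℂ) : ℝ :=
  -(((starRingEnd ℂ) (we z₀) * Fe z₀).im / ((starRingEnd ℂ) (Fe z₀) * Ge z₀).im)

/-- `w_e` has Bers `(F_e,G_e)`-derivative `d` at `z₀`. -/
def HasBersDerivAt (Fe Ge we : ℂ → ℂ) (d z₀ : ℂ) : Prop :=
  Tendsto
    (fun z => (we z - (lamBers Fe Ge we z₀ : ℂ) * Fe z - (muBers Fe Ge we z₀ : ℂ) * Ge z)
        / (z - z₀))
    (𝓝[≠] z₀) (𝓝 d)

/-- `w_e` is `(F_e,G_e)`-pseudoanalytic (in the sense of Bers) on `D`. -/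
def BersPseudoanalyticOn (Fe Ge we : ℂ → ℂ) (D : Set ℂ) : Prop :=
  ∀ z ∈ D, ∃ d, HasBersDerivAt Fe Ge we d z

/-- `∂_z̄ = ½(∂ₓ + i ∂_y)` for functions `ℂ(i₁) → ℂ(i₁)`. -/
def dzbarC (g : ℂ → ℂ) (z : ℂ) : ℂ :=
  (deriv (fun t : ℝ => g (z + t)) 0 + Complex.I * deriv (fun t : ℝ => g (z + t * Complex.I)) 0) / 2

/-- The Bers characteristic coefficient `a_{(F_e,G_e)}`. -/
def aBers (Fe Ge : ℂ → ℂ) (z : ℂ) : ℂ :=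
  -(((starRingEnd ℂ) (Fe z) * dzbarC Ge z - dzbarC Fe z * (starRingEnd ℂ) (Ge z)) /
    (Fe z * (starRingEnd ℂ) (Ge z) - (starRingEnd ℂ) (Fe z) * Ge z))

/-- The Bers characteristic coefficient `b_{(F_e,G_e)}`. -/
def bBers (Fe Ge : ℂ → ℂ) (z : ℂ) : ℂ :=
  (Fe z * dzbarC Ge z - dzbarC Fe z * Ge z) /
    (Fe z * (starRingEnd ℂ) (Ge z) - (starRingEnd ℂ) (Fe z) * Ge z)

/-- `(F, G)` is the `i₂e`-generating pair associated to complex generating pairs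
`(F_{e1}, G_{e1})` on `D₁` and `(F_{e2}, G_{e2})` on `D₂`. -/
def I2eGenPair (Fe1 Ge1 Fe2 Ge2 : ℂ → ℂ) (D₁ D₂ : Set ℂ)
    (F G : Bicomplex → Bicomplex) : Prop :=
  ComplexGenPair Fe1 Ge1 D₁ ∧ ComplexGenPair Fe2 Ge2 D₂ ∧
  (∀ w, F w = ofComplex (Fe1 (P1 w)) * e1 + ofComplex (Fe2 (P2 w)) * e2) ∧
  (∀ w, G w = ofComplex (Ge1 (P1 w)) * e1 + ofComplex (Ge2 (P2 w)) * e2)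

end Bicomplex

open Bicomplex

/-! In the idempotent coordinates `(P₁ ω, P₂ ω)` the algebra `𝕋` becomes `ℂ × ℂ`, `ω - ω₀` is
invertible iff both coordinates differ from those of `ω₀`, and the `ℂ(j)`-coefficients `λ₀, μ₀`
project to the real Bers coefficients `λ, μ` of the two components. Hence, writing
`W₁(P₁ ω, P₂ ω) = P₁ (w ω)`, the first component of the `(F,G)_j`-difference quotient is the Bers
quotient of `W₁` in its first variable, with both variables tending to their limits jointly
(each avoiding its limit). Such a limit gives `W₁(z, z') - (λ F_{e1} + μ G_{e1})(z) = O(z - a)`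
uniformly for `z'` near `b`, which forces `W₁(a, ·)` to be locally constant, hence constant on the
connected `D₂`. So `W₁` only depends on its first variable, and that function is
`(F_{e1}, G_{e1})`-pseudoanalytic with the projected derivative; the second component is
symmetric. -/

section PuncturedProduct

variable {𝕜 : Type*} [NontriviallyNormedField 𝕜]

lemma eventually_eventually_prod_nhdsNE {X Y : Type*} [TopologicalSpace X] [T1Space X]
    {l : Filter Y} {P : Y × X → Prop} {b : X} (h : ∀ᶠ p in l ×ˢ 𝓝[≠] b, P p) :
    ∀ᶠ v in 𝓝 b, ∀ᶠ p in l ×ˢ 𝓝[≠] v, P p := by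
  obtain ⟨s, hs, t, ht, hst⟩ := eventually_prod_iff.1 h
  obtain ⟨U, hU, hUt⟩ := mem_nhdsWithin_iff_exists_mem_nhds_inter.1 ht
  filter_upwards [eventually_mem_nhds_iff.2 hU] with v hv
  refine eventually_prod_iff.2 ⟨s, hs, t, ?_, hst⟩
  rcases eq_or_ne v b with rfl | hvb
  · exact ht
  · exact mem_nhdsWithin_of_mem_nhds
      (mem_of_superset (inter_mem hv (isOpen_compl_singleton.mem_nhds hvb)) hUt)

lemma tendsto_of_isBoundedUnder_div_sub {Y : Type*} {l : Filter Y} {W : 𝕜 × Y → 𝕜}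
    {h : 𝕜 → 𝕜} {a : 𝕜} (hh : ContinuousAt h a)
    (hW : IsBoundedUnder (· ≤ ·) (𝓝[≠] a ×ˢ l) fun p => ‖(W p - h p.1) / (p.1 - a)‖) :
    Tendsto W (𝓝[≠] a ×ˢ l) (𝓝 (h a)) := by
  have hfst : Tendsto (fun p : 𝕜 × Y => p.1) (𝓝[≠] a ×ˢ l) (𝓝[≠] a) := tendsto_fst
  have hsub : Tendsto (fun p : 𝕜 × Y => p.1 - a) (𝓝[≠] a ×ˢ l) (𝓝 0) :=
    tendsto_sub_nhds_zero_iff.2 (tendsto_nhds_of_tendsto_nhdsWithin hfst)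
  have hdiff : Tendsto (fun p => W p - h p.1) (𝓝[≠] a ×ˢ l) (𝓝 0) := by
    refine (isBoundedUnder_le_mul_tendsto_zero hW hsub).congr' ?_
    filter_upwards [hfst self_mem_nhdsWithin] with p hp
    exact div_mul_cancel₀ _ (sub_ne_zero.2 hp)
  simpa using hdiff.add ((hh.tendsto.mono_left nhdsWithin_le_nhds).comp hfst)

lemma apply_eq_of_isBoundedUnder_div_sub {X : Type*} [TopologicalSpace X] [T1Space X]
    [∀ x : X, NeBot (𝓝[≠] x)] {W : 𝕜 × X → 𝕜} {a : 𝕜} {D : Set X} (hD : IsPreconnected D)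
    (H : ∀ b ∈ D, ∃ h : 𝕜 → 𝕜, ContinuousAt h a ∧ h a = W (a, b) ∧
      IsBoundedUnder (· ≤ ·) (𝓝[≠] a ×ˢ 𝓝[≠] b) fun p => ‖(W p - h p.1) / (p.1 - a)‖)
    {b b' : X} (hb : b ∈ D) (hb' : b' ∈ D) : W (a, b) = W (a, b') := by
  have hloc : ∀ b ∈ D, ∀ᶠ v in 𝓝[D] b, W (a, b) = W (a, v) := by
    intro b hb
    obtain ⟨h, hh, hha, C, hC⟩ := H b hb
    -- The bound at `(a, b)` persists at `(a, v)` for `v` near `b`, so both `h a` and `h' a` are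
    -- punctured limits of `W` at `(a, v)`.
    filter_upwards [nhdsWithin_le_nhds (eventually_eventually_prod_nhdsNE hC),
      self_mem_nhdsWithin] with v hCv hv
    obtain ⟨h', hh', hh'a, hW'⟩ := H v hv
    rw [← hha, ← hh'a]
    exact tendsto_nhds_unique (tendsto_of_isBoundedUnder_div_sub hh ⟨C, hCv⟩)
      (tendsto_of_isBoundedUnder_div_sub hh' hW')
  exact hD.induction₂ (fun x y => W (a, x) = W (a, y)) hloc (fun _ _ _ _ _ _ => Eq.trans)
    (fun _ _ _ _ => Eq.symm) hb hb'

end PuncturedProduct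

namespace Bicomplex

open ComplexConjugate

lemma inv_z1 (w : Bicomplex) : w⁻¹.z1 = w.z1 / (w.z1 ^ 2 + w.z2 ^ 2) := rfl
lemma inv_z2 (w : Bicomplex) : w⁻¹.z2 = -w.z2 / (w.z1 ^ 2 + w.z2 ^ 2) := rfl
lemma div_def (w v : Bicomplex) : w / v = w * v⁻¹ := rfl

lemma inv_mul_cancel_of_sq_add_sq_ne_zero {v : Bicomplex} (hv : v.z1 ^ 2 + v.z2 ^ 2 ≠ 0) :
    v⁻¹ * v = 1 := by
  ext <;> simp only [mul_z1, mul_z2, inv_z1, inv_z2, one_z1, one_z2] <;> field_simp <;> ring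

lemma map_div_of_sq_add_sq_ne_zero (π : Bicomplex →+* ℂ) (u : Bicomplex) {v : Bicomplex}
    (hv : v.z1 ^ 2 + v.z2 ^ 2 ≠ 0) : π (u / v) = π u / π v := by
  have hπv : π v⁻¹ * π v = 1 := by rw [← map_mul, inv_mul_cancel_of_sq_add_sq_ne_zero hv, map_one]
  rw [div_def, map_mul, eq_inv_of_mul_eq_one_left hπv, div_eq_mul_inv]

def P1Hom : Bicomplex →+* ℂ where
  toFun := P1
  map_one' := by simp [P1]
  map_mul' w v := by
    simp only [P1, mul_z1, mul_z2]
    linear_combination (-(w.z2 * v.z2)) * I_sq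
  map_zero' := by simp [P1]
  map_add' w v := by simp only [P1, add_z1, add_z2]; ring

def P2Hom : Bicomplex →+* ℂ where
  toFun := P2
  map_one' := by simp [P2]
  map_mul' w v := by
    simp only [P2, mul_z1, mul_z2]
    linear_combination (-(w.z2 * v.z2)) * I_sq
  map_zero' := by simp [P2]
  map_add' w v := by simp only [P2, add_z1, add_z2]; ring

@[simp] lemma P1_sub (w v : Bicomplex) : P1 (w - v) = P1 w - P1 v := map_sub P1Hom w v
@[simp] lemma P2_sub (w v : Bicomplex) : P2 (w - v) = P2 w - P2 v := map_sub P2Hom w v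
@[simp] lemma P1_mul (w v : Bicomplex) : P1 (w * v) = P1 w * P1 v := map_mul P1Hom w v
@[simp] lemma P2_mul (w v : Bicomplex) : P2 (w * v) = P2 w * P2 v := map_mul P2Hom w v
@[simp] lemma P1_neg (w : Bicomplex) : P1 (-w) = -P1 w := map_neg P1Hom w
@[simp] lemma P2_neg (w : Bicomplex) : P2 (-w) = -P2 w := map_neg P2Hom w

lemma sq_z1_add_sq_z2 (w : Bicomplex) : w.z1 ^ 2 + w.z2 ^ 2 = P1 w * P2 w := by
  simp only [P1, P2]
  linear_combination w.z2 ^ 2 * I_sq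

lemma P1_div (u : Bicomplex) {v : Bicomplex} (hv : v.z1 ^ 2 + v.z2 ^ 2 ≠ 0) :
    P1 (u / v) = P1 u / P1 v :=
  map_div_of_sq_add_sq_ne_zero P1Hom u hv

lemma P2_div (u : Bicomplex) {v : Bicomplex} (hv : v.z1 ^ 2 + v.z2 ^ 2 ≠ 0) :
    P2 (u / v) = P2 u / P2 v :=
  map_div_of_sq_add_sq_ne_zero P2Hom u hv

lemma P1_ofComplex_mul_e1_add (a b : ℂ) : P1 (ofComplex a * e1 + ofComplex b * e2) = a := by
  simp only [P1, ofComplex, e1, e2, add_z1, add_z2, mul_z1, mul_z2]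
  linear_combination (-a / 2 + b / 2) * I_sq

lemma P2_ofComplex_mul_e1_add (a b : ℂ) : P2 (ofComplex a * e1 + ofComplex b * e2) = b := by
  simp only [P2, ofComplex, e1, e2, add_z1, add_z2, mul_z1, mul_z2]
  linear_combination (a / 2 - b / 2) * I_sq

lemma ofComplex_P1_mul_e1_add (w : Bicomplex) :
    ofComplex (P1 w) * e1 + ofComplex (P2 w) * e2 = w := by
  ext <;> simp only [P1, P2, ofComplex, e1, e2, add_z1, add_z2, mul_z1, mul_z2]
  · ring
  · linear_combination (-w.z2) * I_sq

lemma ofHyp_neg (a : ℝ × ℝ) : ofHyp (-a) = -ofHyp a := by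
  ext <;> simp [ofHyp]

-- This holds also at zero divisors `b`, where both sides take the junk value `0`.
lemma ofHyp_hdiv (a b : ℝ × ℝ) : ofHyp (hdiv a b) = ofHyp a / ofHyp b := by
  have hden : ((b.1 : ℂ) ^ 2 + ((b.2 : ℂ) * I) ^ 2) = ((b.1 ^ 2 - b.2 ^ 2 : ℝ) : ℂ) := by
    push_cast; linear_combination (b.2 : ℂ) ^ 2 * I_sq
  ext <;> simp only [ofHyp, hdiv, hmul, div_def, mul_z1, mul_z2, inv_z1, inv_z2, hden] <;>
    push_cast
  · linear_combination (-(a.2 * b.2 : ℂ) / ((b.1 : ℂ) ^ 2 - (b.2 : ℂ) ^ 2)) * I_sq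
  · ring

lemma P1_ofHyp (a : ℝ × ℝ) : P1 (ofHyp a) = ((a.1 + a.2 : ℝ) : ℂ) := by
  simp only [P1, ofHyp]
  push_cast
  linear_combination (-(a.2 : ℂ)) * I_sq

lemma P2_ofHyp (a : ℝ × ℝ) : P2 (ofHyp a) = ((a.1 - a.2 : ℝ) : ℂ) := by
  simp only [P2, ofHyp]
  push_cast
  linear_combination (a.2 : ℂ) * I_sq

lemma P1_dag3 (X : Bicomplex) : P1 (dag3 X) = conj (P1 X) := by
  simp [P1, dag3, sub_eq_add_neg]

lemma P2_dag3 (X : Bicomplex) : P2 (dag3 X) = conj (P2 X) := by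
  simp [P2, dag3]

lemma P1_ofHyp_vec3 (Z : Bicomplex) : P1 (ofHyp (vec3 Z)) = (P1 Z).im := by
  rw [P1_ofHyp]
  simp [vec3, P1, sub_eq_add_neg]

lemma P2_ofHyp_vec3 (Z : Bicomplex) : P2 (ofHyp (vec3 Z)) = (P2 Z).im := by
  rw [P2_ofHyp]
  simp [vec3, P2]

lemma sq_add_sq_ofHyp_vec3_dag3_mul_ne_zero {X Y : Bicomplex}
    (h₁ : (conj (P1 X) * P1 Y).im ≠ 0) (h₂ : (conj (P2 X) * P2 Y).im ≠ 0) :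
    (ofHyp (vec3 (dag3 X * Y))).z1 ^ 2 + (ofHyp (vec3 (dag3 X * Y))).z2 ^ 2 ≠ 0 := by
  rw [sq_z1_add_sq_z2, P1_ofHyp_vec3, P2_ofHyp_vec3, P1_mul, P1_dag3, P2_mul, P2_dag3]
  exact mul_ne_zero (ofReal_ne_zero.2 h₁) (ofReal_ne_zero.2 h₂)

lemma P1_ofHyp_lamJ {F G w : Bicomplex → Bicomplex} {ω₀ : Bicomplex}
    (h₁ : (conj (P1 (F ω₀)) * P1 (G ω₀)).im ≠ 0) (h₂ : (conj (P2 (F ω₀)) * P2 (G ω₀)).im ≠ 0) :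
    P1 (ofHyp (lamJ F G w ω₀)) =
      ((conj (P1 (w ω₀)) * P1 (G ω₀)).im / (conj (P1 (F ω₀)) * P1 (G ω₀)).im : ℝ) := by
  rw [lamJ, ofHyp_hdiv, P1_div _ (sq_add_sq_ofHyp_vec3_dag3_mul_ne_zero h₁ h₂)]
  simp only [P1_ofHyp_vec3, P1_mul, P1_dag3, ofReal_div]

lemma P2_ofHyp_lamJ {F G w : Bicomplex → Bicomplex} {ω₀ : Bicomplex}
    (h₁ : (conj (P1 (F ω₀)) * P1 (G ω₀)).im ≠ 0) (h₂ : (conj (P2 (F ω₀)) * P2 (G ω₀)).im ≠ 0) :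
    P2 (ofHyp (lamJ F G w ω₀)) =
      ((conj (P2 (w ω₀)) * P2 (G ω₀)).im / (conj (P2 (F ω₀)) * P2 (G ω₀)).im : ℝ) := by
  rw [lamJ, ofHyp_hdiv, P2_div _ (sq_add_sq_ofHyp_vec3_dag3_mul_ne_zero h₁ h₂)]
  simp only [P2_ofHyp_vec3, P2_mul, P2_dag3, ofReal_div]

lemma P1_ofHyp_muJ {F G w : Bicomplex → Bicomplex} {ω₀ : Bicomplex}
    (h₁ : (conj (P1 (F ω₀)) * P1 (G ω₀)).im ≠ 0) (h₂ : (conj (P2 (F ω₀)) * P2 (G ω₀)).im ≠ 0) :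
    P1 (ofHyp (muJ F G w ω₀)) =
      (-((conj (P1 (w ω₀)) * P1 (F ω₀)).im / (conj (P1 (F ω₀)) * P1 (G ω₀)).im) : ℝ) := by
  rw [muJ, ofHyp_neg, P1_neg, ofHyp_hdiv, P1_div _ (sq_add_sq_ofHyp_vec3_dag3_mul_ne_zero h₁ h₂)]
  simp only [P1_ofHyp_vec3, P1_mul, P1_dag3, ofReal_div, ofReal_neg]

lemma P2_ofHyp_muJ {F G w : Bicomplex → Bicomplex} {ω₀ : Bicomplex}
    (h₁ : (conj (P1 (F ω₀)) * P1 (G ω₀)).im ≠ 0) (h₂ : (conj (P2 (F ω₀)) * P2 (G ω₀)).im ≠ 0) :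
    P2 (ofHyp (muJ F G w ω₀)) =
      (-((conj (P2 (w ω₀)) * P2 (F ω₀)).im / (conj (P2 (F ω₀)) * P2 (G ω₀)).im) : ℝ) := by
  rw [muJ, ofHyp_neg, P2_neg, ofHyp_hdiv, P2_div _ (sq_add_sq_ofHyp_vec3_dag3_mul_ne_zero h₁ h₂)]
  simp only [P2_ofHyp_vec3, P2_mul, P2_dag3, ofReal_div, ofReal_neg]

def idemHomeo : Bicomplex ≃ₜ ℂ × ℂ where
  toFun w := (P1 w, P2 w)
  invFun p := ⟨(p.1 + p.2) / 2, (p.1 - p.2) * I / 2⟩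
  left_inv w := by
    ext
    · simp only [P1, P2]; ring
    · simp only [P1, P2]; linear_combination (-w.z2) * I_sq
  right_inv p := by
    ext
    · simp only [P1]; linear_combination (-(p.1 - p.2) / 2) * I_sq
    · simp only [P2]; linear_combination ((p.1 - p.2) / 2) * I_sq
  continuous_toFun :=
    (show Continuous fun p : ℂ × ℂ => (p.1 - p.2 * I, p.1 + p.2 * I) by fun_prop).comp
      (continuous_induced_dom : Continuous toProd)
  continuous_invFun := by
    refine continuous_induced_rng.2 ?_
    simp only [Function.comp_def, toProd]
    fun_prop

@[simp] lemma idemHomeo_apply (w : Bicomplex) : idemHomeo w = (P1 w, P2 w) := rfl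

@[simp] lemma P1_idemHomeo_symm (p : ℂ × ℂ) : P1 (idemHomeo.symm p) = p.1 :=
  congrArg Prod.fst (idemHomeo.apply_symm_apply p)

@[simp] lemma P2_idemHomeo_symm (p : ℂ × ℂ) : P2 (idemHomeo.symm p) = p.2 :=
  congrArg Prod.snd (idemHomeo.apply_symm_apply p)

@[simp] lemma idemHomeo_symm_P1_P2 (w : Bicomplex) : idemHomeo.symm (P1 w, P2 w) = w :=
  idemHomeo.symm_apply_apply w

@[simp] lemma idemHomeo_symm_mem_eProd {D₁ D₂ : Set ℂ} {p : ℂ × ℂ} :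
    idemHomeo.symm p ∈ eProd D₁ D₂ ↔ p.1 ∈ D₁ ∧ p.2 ∈ D₂ := by
  simp [eProd]

lemma map_idemHomeo_nhdsWithin_invertibleDiff (ω₀ : Bicomplex) :
    map idemHomeo (𝓝[invertibleDiff ω₀] ω₀) = 𝓝[≠] (P1 ω₀) ×ˢ 𝓝[≠] (P2 ω₀) := by
  have h : invertibleDiff ω₀ = idemHomeo ⁻¹' ({P1 ω₀}ᶜ ×ˢ {P2 ω₀}ᶜ) := by
    ext ω
    simp [invertibleDiff, sq_z1_add_sq_z2, sub_eq_zero]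
  rw [idemHomeo.isEmbedding.map_nhdsWithin_eq, h, idemHomeo.image_preimage, idemHomeo_apply,
    nhdsWithin_prod_eq]

lemma tendsto_P1_div_sub {q : Bicomplex → Bicomplex} {d ω₀ : Bicomplex}
    (hq : Tendsto (fun ω => q ω / (ω - ω₀)) (𝓝[invertibleDiff ω₀] ω₀) (𝓝 d)) :
    Tendsto (fun p => P1 (q (idemHomeo.symm p)) / (p.1 - P1 ω₀))
      (𝓝[≠] (P1 ω₀) ×ˢ 𝓝[≠] (P2 ω₀)) (𝓝 (P1 d)) := by
  rw [← map_idemHomeo_nhdsWithin_invertibleDiff, tendsto_map'_iff]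
  refine (((continuous_fst.comp idemHomeo.continuous).tendsto d).comp hq).congr' ?_
  filter_upwards [self_mem_nhdsWithin] with ω hω
  simp [P1_div _ hω]

-- The variables are swapped so that `P2` comes first, as in `HasJointBersDerivAt`.
lemma tendsto_P2_div_sub {q : Bicomplex → Bicomplex} {d ω₀ : Bicomplex}
    (hq : Tendsto (fun ω => q ω / (ω - ω₀)) (𝓝[invertibleDiff ω₀] ω₀) (𝓝 d)) :
    Tendsto (fun p => P2 (q (idemHomeo.symm p.swap)) / (p.1 - P2 ω₀))
      (𝓝[≠] (P2 ω₀) ×ˢ 𝓝[≠] (P1 ω₀)) (𝓝 (P2 d)) := by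
  rw [prod_comm, ← map_idemHomeo_nhdsWithin_invertibleDiff, map_map, tendsto_map'_iff]
  refine (((continuous_snd.comp idemHomeo.continuous).tendsto d).comp hq).congr' ?_
  filter_upwards [self_mem_nhdsWithin] with ω hω
  simp [P2_div _ hω]

lemma lamBers_mul_add_muBers_mul {Fe Ge we : ℂ → ℂ} {z : ℂ} (h : (conj (Fe z) * Ge z).im ≠ 0) :
    (lamBers Fe Ge we z : ℂ) * Fe z + (muBers Fe Ge we z : ℂ) * Ge z = we z := by
  have key : ((conj (we z) * Ge z).im : ℂ) * Fe z - ((conj (we z) * Fe z).im : ℂ) * Ge z =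
      ((conj (Fe z) * Ge z).im : ℂ) * we z := by
    apply Complex.ext <;>
      simp only [sub_re, sub_im, mul_re, mul_im, ofReal_re, ofReal_im, conj_re, conj_im] <;> ring
  have hk : ((conj (Fe z) * Ge z).im : ℂ) ≠ 0 := ofReal_ne_zero.2 h
  rw [lamBers, muBers, ofReal_neg, ofReal_div, ofReal_div]
  calc _ = (((conj (we z) * Ge z).im : ℂ) * Fe z - ((conj (we z) * Fe z).im : ℂ) * Ge z) /
        (conj (Fe z) * Ge z).im := by ring
    _ = we z := by rw [key, mul_div_cancel_left₀ _ hk]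

def HasJointBersDerivAt (Fe Ge : ℂ → ℂ) (W : ℂ × ℂ → ℂ) (d a b : ℂ) : Prop :=
  Tendsto (fun p : ℂ × ℂ => (W p - lamBers Fe Ge (fun u => W (u, b)) a * Fe p.1 -
      muBers Fe Ge (fun u => W (u, b)) a * Ge p.1) / (p.1 - a)) (𝓝[≠] a ×ˢ 𝓝[≠] b) (𝓝 d)

lemma HasFGDerivJ.hasJointBersDerivAt_P1 {F G w : Bicomplex → Bicomplex} {Fe Ge : ℂ → ℂ}
    {d ω₀ : Bicomplex} (hF : ∀ ω, P1 (F ω) = Fe (P1 ω)) (hG : ∀ ω, P1 (G ω) = Ge (P1 ω))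
    (h₁ : (conj (P1 (F ω₀)) * P1 (G ω₀)).im ≠ 0) (h₂ : (conj (P2 (F ω₀)) * P2 (G ω₀)).im ≠ 0)
    (hd : HasFGDerivJ F G w d ω₀) :
    HasJointBersDerivAt Fe Ge (fun p => P1 (w (idemHomeo.symm p))) (P1 d) (P1 ω₀) (P2 ω₀) := by
  have hlam : P1 (ofHyp (lamJ F G w ω₀)) =
      lamBers Fe Ge (fun u => P1 (w (idemHomeo.symm (u, P2 ω₀)))) (P1 ω₀) := by
    simp only [P1_ofHyp_lamJ h₁ h₂, lamBers, idemHomeo_symm_P1_P2, hF, hG]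
  have hmu : P1 (ofHyp (muJ F G w ω₀)) =
      muBers Fe Ge (fun u => P1 (w (idemHomeo.symm (u, P2 ω₀)))) (P1 ω₀) := by
    simp only [P1_ofHyp_muJ h₁ h₂, muBers, idemHomeo_symm_P1_P2, hF, hG]
  refine (tendsto_P1_div_sub hd).congr fun p => ?_
  simp only [P1_sub, P1_mul, hlam, hmu, hF, hG, P1_idemHomeo_symm]

lemma HasFGDerivJ.hasJointBersDerivAt_P2 {F G w : Bicomplex → Bicomplex} {Fe Ge : ℂ → ℂ}
    {d ω₀ : Bicomplex} (hF : ∀ ω, P2 (F ω) = Fe (P2 ω)) (hG : ∀ ω, P2 (G ω) = Ge (P2 ω))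
    (h₁ : (conj (P1 (F ω₀)) * P1 (G ω₀)).im ≠ 0) (h₂ : (conj (P2 (F ω₀)) * P2 (G ω₀)).im ≠ 0)
    (hd : HasFGDerivJ F G w d ω₀) :
    HasJointBersDerivAt Fe Ge (fun p => P2 (w (idemHomeo.symm p.swap))) (P2 d) (P2 ω₀) (P1 ω₀) := by
  have hlam : P2 (ofHyp (lamJ F G w ω₀)) =
      lamBers Fe Ge (fun v => P2 (w (idemHomeo.symm (v, P1 ω₀).swap))) (P2 ω₀) := by
    simp only [P2_ofHyp_lamJ h₁ h₂, lamBers, Prod.swap_prod_mk, idemHomeo_symm_P1_P2, hF, hG]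
  have hmu : P2 (ofHyp (muJ F G w ω₀)) =
      muBers Fe Ge (fun v => P2 (w (idemHomeo.symm (v, P1 ω₀).swap))) (P2 ω₀) := by
    simp only [P2_ofHyp_muJ h₁ h₂, muBers, Prod.swap_prod_mk, idemHomeo_symm_P1_P2, hF, hG]
  refine (tendsto_P2_div_sub hd).congr fun p => ?_
  simp only [P2_sub, P2_mul, hlam, hmu, hF, hG, P2_idemHomeo_symm, Prod.snd_swap]

lemma I2eGenPair.hasJointBersDerivAt {Fe1 Ge1 Fe2 Ge2 : ℂ → ℂ} {D₁ D₂ : Set ℂ}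
    {F G w : Bicomplex → Bicomplex} {d ω : Bicomplex} (hFG : I2eGenPair Fe1 Ge1 Fe2 Ge2 D₁ D₂ F G)
    (hω : ω ∈ eProd D₁ D₂) (hd : HasFGDerivJ F G w d ω) :
    HasJointBersDerivAt Fe1 Ge1 (fun p => P1 (w (idemHomeo.symm p))) (P1 d) (P1 ω) (P2 ω) ∧
      HasJointBersDerivAt Fe2 Ge2 (fun p => P2 (w (idemHomeo.symm p.swap))) (P2 d) (P2 ω)
        (P1 ω) := by
  obtain ⟨⟨-, -, him₁⟩, ⟨-, -, him₂⟩, hF, hG⟩ := hFG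
  have hF₁ (ω : Bicomplex) : P1 (F ω) = Fe1 (P1 ω) := by rw [hF, P1_ofComplex_mul_e1_add]
  have hG₁ (ω : Bicomplex) : P1 (G ω) = Ge1 (P1 ω) := by rw [hG, P1_ofComplex_mul_e1_add]
  have hF₂ (ω : Bicomplex) : P2 (F ω) = Fe2 (P2 ω) := by rw [hF, P2_ofComplex_mul_e1_add]
  have hG₂ (ω : Bicomplex) : P2 (G ω) = Ge2 (P2 ω) := by rw [hG, P2_ofComplex_mul_e1_add]
  have h₁ : (conj (P1 (F ω)) * P1 (G ω)).im ≠ 0 := by rw [hF₁, hG₁]; exact him₁ _ hω.1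
  have h₂ : (conj (P2 (F ω)) * P2 (G ω)).im ≠ 0 := by rw [hF₂, hG₂]; exact him₂ _ hω.2
  exact ⟨hd.hasJointBersDerivAt_P1 hF₁ hG₁ h₁ h₂, hd.hasJointBersDerivAt_P2 hF₂ hG₂ h₁ h₂⟩

lemma HasJointBersDerivAt.hasBersDerivAt {Fe Ge we : ℂ → ℂ} {W : ℂ × ℂ → ℂ} {d a b : ℂ}
    (hW : HasJointBersDerivAt Fe Ge W d a b) (hwe : ∀ᶠ p in 𝓝 (a, b), W p = we p.1) :
    HasBersDerivAt Fe Ge we d a := by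
  have hab : W (a, b) = we a := hwe.self_of_nhds
  rw [HasBersDerivAt, ← map_fst_prod (𝓝[≠] a) (𝓝[≠] b), tendsto_map'_iff]
  refine hW.congr' ?_
  filter_upwards [hwe.filter_mono ((prod_mono nhdsWithin_le_nhds nhdsWithin_le_nhds).trans
    nhds_prod_eq.ge)] with p hp
  simp only [Function.comp, lamBers, muBers, hab, hp]

theorem exists_bersPseudoanalyticOn_of_hasJointBersDerivAt {Fe Ge : ℂ → ℂ} {D₁ D₂ : Set ℂ}
    {W : ℂ × ℂ → ℂ} (hFG : ComplexGenPair Fe Ge D₁) (hD₁ : IsOpen D₁) (hD₂ : IsOpen D₂)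
    (hcD₂ : IsConnected D₂) (hW : ∀ a ∈ D₁, ∀ b ∈ D₂, ∃ d, HasJointBersDerivAt Fe Ge W d a b) :
    ∃ we : ℂ → ℂ, (∀ a ∈ D₁, ∀ b ∈ D₂, W (a, b) = we a) ∧ BersPseudoanalyticOn Fe Ge we D₁ ∧
      ∀ a ∈ D₁, ∀ b ∈ D₂, ∀ d, HasJointBersDerivAt Fe Ge W d a b →
        HasBersDerivAt Fe Ge we d a := by
  obtain ⟨hFc, hGc, him⟩ := hFG
  obtain ⟨b₀, hb₀⟩ := hcD₂.nonempty
  have hconst : ∀ a ∈ D₁, ∀ b ∈ D₂, W (a, b) = W (a, b₀) := by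
    refine fun a ha b hb => apply_eq_of_isBoundedUnder_div_sub hcD₂.isPreconnected
      (fun b hb => ?_) hb hb₀
    obtain ⟨d, hd⟩ := hW a ha b hb
    refine ⟨fun z => lamBers Fe Ge (fun u => W (u, b)) a * Fe z +
      muBers Fe Ge (fun u => W (u, b)) a * Ge z, ?_, lamBers_mul_add_muBers_mul (him a ha),
      by simpa only [sub_add_eq_sub_sub] using hd.norm.isBoundedUnder_le⟩
    exact (continuousAt_const.mul (hFc.continuousOn.continuousAt (hD₁.mem_nhds ha))).add
      (continuousAt_const.mul (hGc.continuousOn.continuousAt (hD₁.mem_nhds ha)))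
  have hder : ∀ a ∈ D₁, ∀ b ∈ D₂, ∀ d, HasJointBersDerivAt Fe Ge W d a b →
      HasBersDerivAt Fe Ge (fun u => W (u, b₀)) d a := by
    refine fun a ha b hb d hd => hd.hasBersDerivAt ?_
    filter_upwards [(hD₁.prod hD₂).mem_nhds ⟨ha, hb⟩] with p hp
    exact hconst p.1 hp.1 p.2 hp.2
  refine ⟨fun u => W (u, b₀), hconst, fun a ha => ?_, hder⟩
  obtain ⟨d, hd⟩ := hW a ha b₀ hb₀
  exact ⟨d, hder a ha b₀ hb₀ d hd⟩

end Bicomplex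

/-- If `(F, G)` is an `i₂e`-generating pair on `D₀ = D₁ ×ₑ D₂` and `w` is
`(F,G)_j`-pseudoanalytic on `D₀`, then `w = w_{e1}(z₁ - z₂i₁)e₁ + w_{e2}(z₁ + z₂i₁)e₂` where
`w_{ek}` is `(F_{ek}, G_{ek})`-pseudoanalytic on `D_k` (`k = 1, 2`), and the derivatives
satisfy `ẇ = ẇ_{e1}(z₁ - z₂i₁)e₁ + ẇ_{e2}(z₁ + z₂i₁)e₂` on `D₀`. -/
theorem pseudoanalyticJ_decomposes_into_Bers (D₁ D₂ : Set ℂ)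
    (hD₁ : IsOpen D₁) (hD₂ : IsOpen D₂) (hcD₁ : IsConnected D₁) (hcD₂ : IsConnected D₂)
    (Fe1 Ge1 Fe2 Ge2 : ℂ → ℂ) (F G : Bicomplex → Bicomplex)
    (hFG : I2eGenPair Fe1 Ge1 Fe2 Ge2 D₁ D₂ F G)
    (w : Bicomplex → Bicomplex) (hw : PseudoanalyticJ F G w (eProd D₁ D₂)) :
    ∃ we1 we2 : ℂ → ℂ,
      (∀ ω ∈ eProd D₁ D₂,
        w ω = ofComplex (we1 (P1 ω)) * e1 + ofComplex (we2 (P2 ω)) * e2) ∧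
      BersPseudoanalyticOn Fe1 Ge1 we1 D₁ ∧
      BersPseudoanalyticOn Fe2 Ge2 we2 D₂ ∧
      ∀ ω ∈ eProd D₁ D₂, ∃ d1 d2 : ℂ,
        HasBersDerivAt Fe1 Ge1 we1 d1 (P1 ω) ∧
        HasBersDerivAt Fe2 Ge2 we2 d2 (P2 ω) ∧
        HasFGDerivJ F G w (ofComplex d1 * e1 + ofComplex d2 * e2) ω := by
  have hmem {a b : ℂ} (ha : a ∈ D₁) (hb : b ∈ D₂) : idemHomeo.symm (a, b) ∈ eProd D₁ D₂ :=
    idemHomeo_symm_mem_eProd.2 ⟨ha, hb⟩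
  obtain ⟨we1, hwe1, hpa1, hder1⟩ := exists_bersPseudoanalyticOn_of_hasJointBersDerivAt
    (W := fun p => P1 (w (idemHomeo.symm p))) hFG.1 hD₁ hD₂ hcD₂ fun a ha b hb => by
      obtain ⟨d, hd⟩ := hw _ (hmem ha hb)
      exact ⟨_, by simpa using (hFG.hasJointBersDerivAt (hmem ha hb) hd).1⟩
  obtain ⟨we2, hwe2, hpa2, hder2⟩ := exists_bersPseudoanalyticOn_of_hasJointBersDerivAt
    (W := fun p => P2 (w (idemHomeo.symm p.swap))) hFG.2.1 hD₂ hD₁ hcD₁ fun b hb a ha => by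
      obtain ⟨d, hd⟩ := hw _ (hmem ha hb)
      exact ⟨_, by simpa using (hFG.hasJointBersDerivAt (hmem ha hb) hd).2⟩
  refine ⟨we1, we2, fun ω hω => ?_, hpa1, hpa2, fun ω hω => ?_⟩
  · rw [← hwe1 _ hω.1 _ hω.2, ← hwe2 _ hω.2 _ hω.1]
    simpa using (ofComplex_P1_mul_e1_add (w ω)).symm
  · obtain ⟨d, hd⟩ := hw ω hω
    obtain ⟨hd₁, hd₂⟩ := hFG.hasJointBersDerivAt hω hd
    refine ⟨P1 d, P2 d, hder1 _ hω.1 _ hω.2 _ hd₁, hder2 _ hω.2 _ hω.1 _ hd₂, ?_⟩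
    rwa [ofComplex_P1_mul_e1_add]
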